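/- arXiv:1812.10519 — 2 statements merged into one kernel-verified Lean document; each statement's English description precedes it below -/
import Mathlib

section
/- Let p ∈ (1/2, 1). With the log-likelihood ℓ(p,P) defined as above, a permutation matrix P maximizes ℓ(p,·) if and only if P minimizes ‖A − Pᵀ B̆ P‖_F² over permutation matrices, where B̆ is the complement graph of B, i.e. B̆_{ij} = 1 − B_{ij} for i ≠ j and B̆_{ii} = 0. -/
open Finset

attribute [local instance] Classical.propDecidable

/-- Squared Frobenius norm of a matrix. -/
noncomputable def frobSq {n : ℕ} (M : Matrix (Fin n) (Fin n) ℝ) : ℝ := ∑ i, ∑ j, (M i j) ^ 2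

/-- `(QᵀMQ)_{ij} = M_{σ(i)σ(j)}` for the permutation matrix `Q` of `σ`. -/
noncomputable def conjPerm {n : ℕ} (σ : Equiv.Perm (Fin n)) (M : Matrix (Fin n) (Fin n) ℝ) :
    Matrix (Fin n) (Fin n) ℝ := Matrix.of fun i j => M (σ i) (σ j)

/-- Unordered vertex pairs, represented by ordered pairs `i < j`. -/
def pairsF (n : ℕ) : Finset (Fin n × Fin n) := Finset.univ.filter fun p => p.1 < p.2

/-- Symmetrized flip indicator. -/
def flipAt {n : ℕ} (f : Fin n × Fin n → Bool) (i j : Fin n) : Bool :=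
  if i < j then f (i, j) else if j < i then f (j, i) else false

/-- The channel-corrupted graph (with identity shuffling). -/
noncomputable def corrupt {n : ℕ} (A : Matrix (Fin n) (Fin n) ℝ) (f : Fin n × Fin n → Bool) :
    Matrix (Fin n) (Fin n) ℝ := Matrix.of fun i j => if flipAt f i j then 1 - A i j else A i j

/-- Probability weight of a flip configuration with per-pair flip probabilities `q`. -/
noncomputable def wt {n : ℕ} (q : Fin n × Fin n → ℝ) (f : Fin n × Fin n → Bool) : ℝ :=
  ∏ p ∈ pairsF n, if f p then q p else 1 - q p

/-- The matrix has 0/1 entries. -/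
def zeroOne {n : ℕ} (A : Matrix (Fin n) (Fin n) ℝ) : Prop := ∀ i j, A i j = 0 ∨ A i j = 1

/-- The matrix has zero diagonal. -/
def hollow {n : ℕ} (A : Matrix (Fin n) (Fin n) ℝ) : Prop := ∀ i, A i i = 0

/-- Log-likelihood of the uniform corrupting channel. -/
noncomputable def logLik {n : ℕ} (A B : Matrix (Fin n) (Fin n) ℝ) (p : ℝ)
    (σ : Equiv.Perm (Fin n)) : ℝ :=
  ∑ pr ∈ pairsF n,
    if A pr.1 pr.2 = conjPerm σ B pr.1 pr.2 then Real.log (1 - p) else Real.log p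

/-- The complement graph: `B̆_{ij} = 1 − B_{ij}` off the diagonal, `B̆_{ii} = 0`. -/
noncomputable def complGraph {n : ℕ} (B : Matrix (Fin n) (Fin n) ℝ) : Matrix (Fin n) (Fin n) ℝ :=
  Matrix.of fun i j => if i = j then 0 else 1 - B i j

/-- Sum over all ordered pairs of a symmetric, diagonally-zero function is twice
the sum over pairs `i < j`. -/
lemma sum_pairs_symm {n : ℕ} (h : Fin n → Fin n → ℝ) (hsym : ∀ i j, h i j = h j i)
    (hdiag : ∀ i, h i i = 0) :
    ∑ i, ∑ j, h i j = 2 * ∑ pr ∈ pairsF n, h pr.1 pr.2 := by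
  classical
  have hprod : ∑ pr : Fin n × Fin n, h pr.1 pr.2 = ∑ i, ∑ j, h i j := Fintype.sum_prod_type _
  rw [← hprod]
  have hsplit := Finset.sum_filter_add_sum_filter_not (Finset.univ : Finset (Fin n × Fin n))
    (fun pr => pr.1 < pr.2) (fun pr => h pr.1 pr.2)
  have h2 : ∑ pr ∈ (Finset.univ.filter fun pr : Fin n × Fin n => ¬ pr.1 < pr.2), h pr.1 pr.2
      = ∑ pr ∈ (Finset.univ.filter fun pr : Fin n × Fin n => pr.2 < pr.1), h pr.1 pr.2 := by
    apply (Finset.sum_subset ?_ ?_).symm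
    · intro pr hpr
      simp only [Finset.mem_filter, Finset.mem_univ, true_and] at hpr ⊢
      exact not_lt_of_gt hpr
    · intro pr hpr hnpr
      simp only [Finset.mem_filter, Finset.mem_univ, true_and] at hpr hnpr
      have : pr.1 = pr.2 := le_antisymm (le_of_not_gt hnpr) (le_of_not_gt hpr)
      rw [this]; exact hdiag _
  have h3 : ∑ pr ∈ (Finset.univ.filter fun pr : Fin n × Fin n => pr.2 < pr.1), h pr.1 pr.2
      = ∑ pr ∈ (Finset.univ.filter fun pr : Fin n × Fin n => pr.1 < pr.2), h pr.1 pr.2 := by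
    refine Finset.sum_nbij' (fun pr => Prod.swap pr) (fun pr => Prod.swap pr) ?_ ?_ ?_ ?_ ?_ <;>
      simp [hsym]
  show ∑ pr ∈ (Finset.univ : Finset (Fin n × Fin n)), h pr.1 pr.2
      = 2 * ∑ pr ∈ pairsF n, h pr.1 pr.2
  rw [← hsplit, h2, h3]; unfold pairsF; ring

/-- The agreement count (as a real number). -/
noncomputable def Dagree {n : ℕ} (A B : Matrix (Fin n) (Fin n) ℝ) (σ : Equiv.Perm (Fin n)) : ℝ :=
  ∑ pr ∈ pairsF n, if A pr.1 pr.2 = conjPerm σ B pr.1 pr.2 then (1 : ℝ) else 0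

lemma logLik_eq {n : ℕ} (A B : Matrix (Fin n) (Fin n) ℝ) (p : ℝ) (σ : Equiv.Perm (Fin n)) :
    logLik A B p σ = (pairsF n).card * Real.log p
      + Dagree A B σ * (Real.log (1 - p) - Real.log p) := by
  unfold logLik Dagree
  have key : ∀ pr ∈ pairsF n,
      (if A pr.1 pr.2 = conjPerm σ B pr.1 pr.2 then Real.log (1 - p) else Real.log p)
      = Real.log p + (if A pr.1 pr.2 = conjPerm σ B pr.1 pr.2 then (1 : ℝ) else 0)
          * (Real.log (1 - p) - Real.log p) := by
    intro pr _; split <;> ring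
  rw [Finset.sum_congr rfl key, Finset.sum_add_distrib, ← Finset.sum_mul, Finset.sum_const,
    nsmul_eq_mul]

lemma frob_eq {n : ℕ} (A B : Matrix (Fin n) (Fin n) ℝ) (hA01 : zeroOne A) (hB01 : zeroOne B)
    (hAsym : A.IsSymm) (hBsym : B.IsSymm) (hAh : hollow A) (hBh : hollow B)
    (σ : Equiv.Perm (Fin n)) :
    frobSq (A - conjPerm σ (complGraph B)) = 2 * Dagree A B σ := by
  unfold frobSq Dagree
  have hsym : ∀ i j, ((A - conjPerm σ (complGraph B)) i j) ^ 2
      = ((A - conjPerm σ (complGraph B)) j i) ^ 2 := by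
    intro i j
    have hA : A i j = A j i := (hAsym.apply i j).symm
    have hB : B (σ i) (σ j) = B (σ j) (σ i) := (hBsym.apply (σ i) (σ j)).symm
    simp only [Matrix.sub_apply, conjPerm, complGraph, Matrix.of_apply]
    rw [hA, hB]
    by_cases h : σ i = σ j
    · simp [h]
    · rw [if_neg h, if_neg (fun hh => h hh.symm)]
  have hdiag : ∀ i, ((A - conjPerm σ (complGraph B)) i i) ^ 2 = 0 := by
    intro i
    simp [Matrix.sub_apply, conjPerm, complGraph, hAh i]
  rw [sum_pairs_symm _ hsym hdiag]
  congr 1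
  apply Finset.sum_congr rfl
  intro pr hpr
  have hlt : pr.1 < pr.2 := (Finset.mem_filter.mp hpr).2
  have hne : σ pr.1 ≠ σ pr.2 := fun h => absurd (σ.injective h) (ne_of_lt hlt)
  simp only [Matrix.sub_apply, conjPerm, complGraph, Matrix.of_apply, if_neg hne]
  rcases hA01 pr.1 pr.2 with hA | hA <;> rcases hB01 (σ pr.1) (σ pr.2) with hB | hB <;>
    simp [hA, hB] <;> norm_num

theorem stmt2 {n : ℕ} (A B : Matrix (Fin n) (Fin n) ℝ) (hA01 : zeroOne A) (hB01 : zeroOne B)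
    (hAsym : A.IsSymm) (hBsym : B.IsSymm) (hAh : hollow A) (hBh : hollow B)
    (p : ℝ) (hp : 1 / 2 < p) (hp2 : p < 1) (P : Equiv.Perm (Fin n)) :
    (∀ Q : Equiv.Perm (Fin n), logLik A B p Q ≤ logLik A B p P) ↔
      (∀ Q : Equiv.Perm (Fin n),
        frobSq (A - conjPerm P (complGraph B)) ≤ frobSq (A - conjPerm Q (complGraph B))) := by
  have hc : Real.log (1 - p) - Real.log p < 0 := by
    have : Real.log (1 - p) < Real.log p :=
      Real.log_lt_log (by linarith) (by linarith)
    linarith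
  constructor
  · intro h Q
    rw [frob_eq A B hA01 hB01 hAsym hBsym hAh hBh, frob_eq A B hA01 hB01 hAsym hBsym hAh hBh]
    have := h Q
    rw [logLik_eq, logLik_eq] at this
    nlinarith [this]
  · intro h Q
    have := h Q
    rw [frob_eq A B hA01 hB01 hAsym hBsym hAh hBh, frob_eq A B hA01 hB01 hAsym hBsym hAh hBh] at this
    rw [logLik_eq, logLik_eq]
    nlinarith [this]
end

section
/- Let Q and Q' be disjoint permutation matrices (their associated permutations move disjoint sets of vertices), each moving at most k vertices. For a graph A and channel-corrupted B̃, write X̂_Q = (1/2)(‖A − QᵀB̃Q‖_F² − ‖A − B̃‖_F²). Then X̂_{Q'} can be decomposed as X̂_{Q'} = Y + W, where Y is a function only of corruption variables not involved in X̂_Q (hence Y is independent of X̂_Q) and |W| ≤ 2k². -/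
open Finset

attribute [local instance] Classical.propDecidable

/-- `X̂_Q(f) = (1/2)(‖A − QᵀB̃Q‖_F² − ‖A − B̃‖_F²)` for the corruption configuration `f`. -/
noncomputable def XhatFn {n : ℕ} (A : Matrix (Fin n) (Fin n) ℝ) (σ : Equiv.Perm (Fin n))
    (f : Fin n × Fin n → Bool) : ℝ :=
  (1 / 2) * (frobSq (A - conjPerm σ (corrupt A f)) - frobSq (A - corrupt A f))

/-!
Each summand of `X̂_τ`, indexed by an ordered pair `(i, j)`, depends on the corruption only
through the flips at `{i, j}` and `{τ i, τ j}`, and vanishes when `τ` fixes both `i` and `j`.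
Take `Y` to be `X̂_τ` evaluated after resetting every flip at a pair touching a vertex moved
by `σ`. Since `σ` and `τ` commute and move disjoint sets, a summand is affected by the reset
only if one of `i, j` is moved by `σ` and the other by `τ`; there are at most `2k²` such
ordered pairs, and each summand changes by at most `2`, which the factor `1/2` absorbs.
-/

section

variable {n : ℕ}

lemma flipAt_congr {f g : Fin n × Fin n → Bool} (h : ∀ pr ∈ pairsF n, f pr = g pr)
    (i j : Fin n) : flipAt f i j = flipAt g i j := by
  unfold flipAt
  split_ifs with hij hji
  · exact h (i, j) (by simp [pairsF, hij])
  · exact h (j, i) (by simp [pairsF, hji])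
  · rfl

lemma corrupt_apply_congr (A : Matrix (Fin n) (Fin n) ℝ) {f g : Fin n × Fin n → Bool}
    {i j : Fin n} (h : flipAt f i j = flipAt g i j) : corrupt A f i j = corrupt A g i j := by
  simp only [corrupt, Matrix.of_apply, h]

lemma XhatFn_congr (A : Matrix (Fin n) (Fin n) ℝ) (τ : Equiv.Perm (Fin n))
    {f g : Fin n × Fin n → Bool} (h : ∀ pr ∈ pairsF n, f pr = g pr) :
    XhatFn A τ f = XhatFn A τ g := by
  have hfg : corrupt A f = corrupt A g := by
    ext i j
    exact corrupt_apply_congr A (flipAt_congr h i j)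
  rw [XhatFn, XhatFn, hfg]

lemma sq_sub_corrupt_mem_Icc {A : Matrix (Fin n) (Fin n) ℝ} (hA : zeroOne A)
    (f : Fin n × Fin n → Bool) (a b c d : Fin n) :
    (A a b - corrupt A f c d) ^ 2 ∈ Set.Icc (0 : ℝ) 1 := by
  simp only [corrupt, Matrix.of_apply]
  rcases hA a b with hab | hab <;> rcases hA c d with hcd | hcd <;> split <;>
    simp [hab, hcd]

noncomputable def xhatTerm (A : Matrix (Fin n) (Fin n) ℝ) (τ : Equiv.Perm (Fin n))
    (f : Fin n × Fin n → Bool) (p : Fin n × Fin n) : ℝ :=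
  (A p.1 p.2 - corrupt A f (τ p.1) (τ p.2)) ^ 2 - (A p.1 p.2 - corrupt A f p.1 p.2) ^ 2

lemma XhatFn_eq_sum (A : Matrix (Fin n) (Fin n) ℝ) (τ : Equiv.Perm (Fin n))
    (f : Fin n × Fin n → Bool) : XhatFn A τ f = (1 / 2) * ∑ p, xhatTerm A τ f p := by
  simp only [XhatFn, frobSq, xhatTerm, Matrix.sub_apply, conjPerm, Matrix.of_apply,
    ← Finset.univ_product_univ, Finset.sum_product, ← Finset.sum_sub_distrib]

lemma xhatTerm_of_fixed (A : Matrix (Fin n) (Fin n) ℝ) {τ : Equiv.Perm (Fin n)}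
    (f : Fin n × Fin n → Bool) {i j : Fin n} (hi : τ i = i) (hj : τ j = j) :
    xhatTerm A τ f (i, j) = 0 := by
  simp [xhatTerm, hi, hj]

lemma abs_xhatTerm_sub_le {A : Matrix (Fin n) (Fin n) ℝ} (hA : zeroOne A)
    (τ : Equiv.Perm (Fin n)) (f g : Fin n × Fin n → Bool) (p : Fin n × Fin n) :
    |xhatTerm A τ f p - xhatTerm A τ g p| ≤ 2 := by
  obtain ⟨h1, h2⟩ := sq_sub_corrupt_mem_Icc hA f p.1 p.2 (τ p.1) (τ p.2)
  obtain ⟨h3, h4⟩ := sq_sub_corrupt_mem_Icc hA f p.1 p.2 p.1 p.2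
  obtain ⟨h5, h6⟩ := sq_sub_corrupt_mem_Icc hA g p.1 p.2 (τ p.1) (τ p.2)
  obtain ⟨h7, h8⟩ := sq_sub_corrupt_mem_Icc hA g p.1 p.2 p.1 p.2
  rw [xhatTerm, xhatTerm, abs_le]
  constructor <;> linarith

lemma Equiv.Perm.Disjoint.apply_apply_eq {α : Type*} {σ τ : Equiv.Perm α}
    (hdisj : σ.Disjoint τ) {x : α} (hx : σ x = x) : σ (τ x) = τ x := by
  rw [← Equiv.Perm.mul_apply, hdisj.commute.eq, Equiv.Perm.mul_apply, hx]

lemma xhatTerm_eq_of_not_mem {A : Matrix (Fin n) (Fin n) ℝ} {σ τ : Equiv.Perm (Fin n)}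
    (hdisj : σ.Disjoint τ) {f g : Fin n × Fin n → Bool}
    (hfg : ∀ a b, σ a = a → σ b = b → flipAt f a b = flipAt g a b) {p : Fin n × Fin n}
    (hp : p ∉ (univ.filter fun i => τ i ≠ i) ×ˢ (univ.filter fun i => σ i ≠ i) ∪
      (univ.filter fun i => σ i ≠ i) ×ˢ (univ.filter fun i => τ i ≠ i)) :
    xhatTerm A τ f p = xhatTerm A τ g p := by
  obtain ⟨i, j⟩ := p
  simp only [mem_union, mem_product, mem_filter, mem_univ, true_and, not_or, not_and,
    not_not] at hp
  by_cases hτ : τ i = i ∧ τ j = j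
  · rw [xhatTerm_of_fixed A f hτ.1 hτ.2, xhatTerm_of_fixed A g hτ.1 hτ.2]
  have hσ : σ i = i ∧ σ j = j := by
    rcases not_and_or.1 hτ with hi | hj
    · exact ⟨(hdisj i).resolve_right hi, hp.1 hi⟩
    · exact ⟨by_contra fun hi => hj (hp.2 hi), (hdisj j).resolve_right hj⟩
  simp only [xhatTerm]
  rw [corrupt_apply_congr A (hfg i j hσ.1 hσ.2),
    corrupt_apply_congr A (hfg (τ i) (τ j) (hdisj.apply_apply_eq hσ.1)
      (hdisj.apply_apply_eq hσ.2))]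

lemma card_product_union_product_le (s t : Finset (Fin n)) :
    (#(t ×ˢ s ∪ s ×ˢ t) : ℝ) ≤ 2 * #s * #t := by
  have h := card_union_le (t ×ˢ s) (s ×ˢ t)
  rw [card_product, card_product] at h
  have h' : (#(t ×ˢ s ∪ s ×ˢ t) : ℝ) ≤ #t * #s + #s * #t := by exact_mod_cast h
  linarith

theorem abs_XhatFn_sub_le {A : Matrix (Fin n) (Fin n) ℝ} (hA : zeroOne A)
    {σ τ : Equiv.Perm (Fin n)} (hdisj : σ.Disjoint τ) {f g : Fin n × Fin n → Bool}
    (hfg : ∀ a b, σ a = a → σ b = b → flipAt f a b = flipAt g a b) :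
    |XhatFn A τ f - XhatFn A τ g| ≤
      2 * #(univ.filter fun i => σ i ≠ i) * #(univ.filter fun i => τ i ≠ i) := by
  set E := (univ.filter fun i => τ i ≠ i) ×ˢ (univ.filter fun i => σ i ≠ i) ∪
    (univ.filter fun i => σ i ≠ i) ×ˢ (univ.filter fun i => τ i ≠ i)
  have hsum : ∑ p, (xhatTerm A τ f p - xhatTerm A τ g p) =
      ∑ p ∈ E, (xhatTerm A τ f p - xhatTerm A τ g p) :=
    (sum_subset (subset_univ E) fun p _ hp =>
      sub_eq_zero.2 (xhatTerm_eq_of_not_mem hdisj hfg hp)).symm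
  calc |XhatFn A τ f - XhatFn A τ g|
      = (1 / 2) * |∑ p ∈ E, (xhatTerm A τ f p - xhatTerm A τ g p)| := by
        rw [XhatFn_eq_sum, XhatFn_eq_sum, ← mul_sub, ← sum_sub_distrib, hsum, abs_mul]
        norm_num
    _ ≤ (1 / 2) * (#E • (2 : ℝ)) := by
        gcongr
        exact (abs_sum_le_sum_abs _ _).trans
          (sum_le_card_nsmul _ _ _ fun p _ => abs_xhatTerm_sub_le hA τ f g p)
    _ = #E := by rw [nsmul_eq_mul]; ring
    _ ≤ _ := card_product_union_product_le _ _

def maskFixed (σ : Equiv.Perm (Fin n)) (f : Fin n × Fin n → Bool) : Fin n × Fin n → Bool :=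
  fun p => if σ p.1 = p.1 ∧ σ p.2 = p.2 then f p else false

lemma flipAt_maskFixed {σ : Equiv.Perm (Fin n)} (f : Fin n × Fin n → Bool) {a b : Fin n}
    (ha : σ a = a) (hb : σ b = b) : flipAt (maskFixed σ f) a b = flipAt f a b := by
  unfold flipAt
  split_ifs <;> simp [maskFixed, ha, hb]

lemma XhatFn_maskFixed_congr (A : Matrix (Fin n) (Fin n) ℝ) (σ τ : Equiv.Perm (Fin n))
    {f g : Fin n × Fin n → Bool}
    (h : ∀ pr ∈ pairsF n, σ pr.1 = pr.1 ∧ σ pr.2 = pr.2 → f pr = g pr) :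
    XhatFn A τ (maskFixed σ f) = XhatFn A τ (maskFixed σ g) := by
  refine XhatFn_congr A τ fun pr hpr => ?_
  simp only [maskFixed]
  split_ifs with hfix
  · exact h pr hpr hfix
  · rfl

end

theorem stmt17_general {n k : ℕ} (A : Matrix (Fin n) (Fin n) ℝ)
    (hA01 : zeroOne A)
    (σ τ : Equiv.Perm (Fin n))
    -- σ and τ move disjoint sets of vertices, each of size at most k
    (hdisj : ∀ i, σ i = i ∨ τ i = i)
    (hσk : (Finset.univ.filter fun i => σ i ≠ i).card ≤ k)
    (hτk : (Finset.univ.filter fun i => τ i ≠ i).card ≤ k) :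
    ∃ Y W : (Fin n × Fin n → Bool) → ℝ,
      (∀ f, XhatFn A τ f = Y f + W f) ∧
      (∀ f, |W f| ≤ 2 * (k : ℝ) ^ 2) ∧
      -- Y depends only on corruption variables not involved in X̂_σ, i.e. only on pairs
      -- both of whose endpoints are fixed by σ (hence Y is independent of X̂_σ)
      (∀ f g : Fin n × Fin n → Bool,
        (∀ pr ∈ pairsF n, σ pr.1 = pr.1 ∧ σ pr.2 = pr.2 → f pr = g pr) → Y f = Y g) := by
  refine ⟨fun f => XhatFn A τ (maskFixed σ f),
    fun f => XhatFn A τ f - XhatFn A τ (maskFixed σ f), fun f => by ring, fun f => ?_,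
    fun f g => XhatFn_maskFixed_congr A σ τ⟩
  have hσk' : (#(univ.filter fun i => σ i ≠ i) : ℝ) ≤ k := by exact_mod_cast hσk
  have hτk' : (#(univ.filter fun i => τ i ≠ i) : ℝ) ≤ k := by exact_mod_cast hτk
  calc |XhatFn A τ f - XhatFn A τ (maskFixed σ f)|
      ≤ 2 * #(univ.filter fun i => σ i ≠ i) * #(univ.filter fun i => τ i ≠ i) :=
        abs_XhatFn_sub_le hA01 hdisj fun a b ha hb => (flipAt_maskFixed f ha hb).symm
    _ ≤ 2 * k * k := by gcongr
    _ = 2 * (k : ℝ) ^ 2 := by ring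

theorem stmt17 {n k : ℕ} (A : Matrix (Fin n) (Fin n) ℝ)
    (hA01 : zeroOne A) (hAsym : A.IsSymm) (hAh : hollow A)
    (σ τ : Equiv.Perm (Fin n))
    -- σ and τ move disjoint sets of vertices, each of size at most k
    (hdisj : ∀ i, σ i = i ∨ τ i = i)
    (hσk : (Finset.univ.filter fun i => σ i ≠ i).card ≤ k)
    (hτk : (Finset.univ.filter fun i => τ i ≠ i).card ≤ k) :
    ∃ Y W : (Fin n × Fin n → Bool) → ℝ,
      (∀ f, XhatFn A τ f = Y f + W f) ∧
      (∀ f, |W f| ≤ 2 * (k : ℝ) ^ 2) ∧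
      -- Y depends only on corruption variables not involved in X̂_σ, i.e. only on pairs
      -- both of whose endpoints are fixed by σ (hence Y is independent of X̂_σ)
      (∀ f g : Fin n × Fin n → Bool,
        (∀ pr ∈ pairsF n, σ pr.1 = pr.1 ∧ σ pr.2 = pr.2 → f pr = g pr) → Y f = Y g) :=
  stmt17_general A hA01 σ τ hdisj hσk hτk
end
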